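/- arXiv:2010.14927 — 5 statements merged into one kernel-verified Lean document; each statement's English description precedes it below -/
import Mathlib

section
/- For all constants c1, c2 ∈ (0,1) and every integer depth t ≥ 2, there exist constants C1, C2 > 0 such that the following holds. Let d = d_1 ≥ d_2 ≥ ... ≥ d_t be dimensions with d_t ≥ C1·ln(d) and d ≥ 2, let W_j be d_{j+1}×d_j real matrices for j = 1,...,t (with d_{t+1} = 1) such that each W_j is (c1, c2)-surjective and has operator norm at most 1/c2, and let x0 ∈ ℝ^d be a nonzero vector such that: (i) for every i ∈ {1,...,t−1}, at least 2·c1·d_{i+1} coordinates of h_{W_1,...,W_i}(x0) are at least c2·‖x0‖/√d, and (ii) |h(x0)| ≤ ‖x0‖·√(ln(d)/d). Then there exists x' ∈ ℝ^d with ‖x' − x0‖ ≤ C2·‖x0‖·√(ln d)/√d such that h(x0)·h(x') ≤ 0. -/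
open MeasureTheory ProbabilityTheory Real Finset Matrix

noncomputable section

/-- Euclidean norm of a vector in `ℝ^n`. -/
def e2norm {n : ℕ} (v : Fin n → ℝ) : ℝ := Real.sqrt (∑ i, v i ^ 2)

/-- Coordinatewise ReLU. -/
def relu {n : ℕ} (v : Fin n → ℝ) : Fin n → ℝ := fun i => max (v i) 0

/-- Post-activation output of layer `i` of the ReLU network (`netPost 0 = x` is the input;
no ReLU is applied to the input). -/
def netPost (D : ℕ → ℕ) (W : ∀ j : ℕ, Matrix (Fin (D (j + 1))) (Fin (D j)) ℝ)
    (x : Fin (D 0) → ℝ) : (i : ℕ) → Fin (D i) → ℝ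
  | 0 => x
  | i + 1 => relu ((W i).mulVec (netPost D W x i))

/-- Pre-activation output of layer `i` of the ReLU network: for `i ≥ 1` this is
`h_{W_1,…,W_i}(x)`, the output of the `i`-th layer before the ReLU is applied. -/
def netPre (D : ℕ → ℕ) (W : ∀ j : ℕ, Matrix (Fin (D (j + 1))) (Fin (D j)) ℝ)
    (x : Fin (D 0) → ℝ) : (i : ℕ) → Fin (D i) → ℝ
  | 0 => x
  | i + 1 => (W i).mulVec (netPost D W x i)

/-- The real-valued output `h(x)` of a depth-`t` network: when `D t = 1` the sum over the
single output coordinate is exactly the network output. -/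
def netOut (D : ℕ → ℕ) (W : ∀ j : ℕ, Matrix (Fin (D (j + 1))) (Fin (D j)) ℝ)
    (t : ℕ) (x : Fin (D 0) → ℝ) : ℝ := ∑ r, netPre D W x t r
/-- `W` is `c`-surjective: `c·B^k ⊆ W(B^d)` (balls w.r.t. Euclidean norms). -/
def IsCSurj {k d : ℕ} (W : Matrix (Fin k) (Fin d) ℝ) (c : ℝ) : Prop :=
  ∀ y : Fin k → ℝ, e2norm y ≤ c → ∃ x : Fin d → ℝ, e2norm x ≤ 1 ∧ W.mulVec x = y

/-- `W^A`: zero out all columns of `W` with index outside `A`. -/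
def zeroOutside {k d : ℕ} (W : Matrix (Fin k) (Fin d) ℝ) (A : Finset (Fin d)) :
    Matrix (Fin k) (Fin d) ℝ :=
  Matrix.of fun i j => if j ∈ A then W i j else 0

/-- `W` is `(c1, c2)`-surjective. -/
def IsPairSurj {k d : ℕ} (W : Matrix (Fin k) (Fin d) ℝ) (c1 c2 : ℝ) : Prop :=
  ∀ A : Finset (Fin d), c1 * d ≤ A.card → IsCSurj (zeroOutside W A) c2

/-!
Starting from `x0`, walk towards the decision boundary in `K ≈ √(log d) / c2^(t+1)` steps, each
changing the output by at most `c2^t θ`, where `θ = c2 ‖x0‖ / (2√d)`. A step is built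
backwards: the desired change at layer `j + 1` is pulled back through `W_j` by
`(c1, c2)`-surjectivity, using only neurons on which the current point is active with margin
`θ`. The pulled-back changes have norm at most `θ`, so those ReLUs stay on and the network is
linear along the step. After `k` steps every layer has moved by at most `k θ`, so by Chebyshev
at most `k²` of the `2 c1 d_i` neurons on which `x0` has margin `2θ` lose margin `θ`; the
hypothesis `d_t ≥ C1 log d` makes `k² ≤ c1 d_i`, so enough active neurons remain for
surjectivity.
-/

section E2Norm

variable {n : ℕ}

lemma e2norm_eq_norm (v : Fin n → ℝ) : e2norm v = ‖WithLp.toLp 2 v‖ := by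
  simp [e2norm, EuclideanSpace.norm_eq, sq_abs]

lemma e2norm_nonneg (v : Fin n → ℝ) : 0 ≤ e2norm v := Real.sqrt_nonneg _

lemma e2norm_sq (v : Fin n → ℝ) : e2norm v ^ 2 = ∑ i, v i ^ 2 :=
  Real.sq_sqrt (sum_nonneg fun _ _ => sq_nonneg _)

lemma e2norm_zero : e2norm (0 : Fin n → ℝ) = 0 := by simp [e2norm]

lemma e2norm_pos {v : Fin n → ℝ} (h : v ≠ 0) : 0 < e2norm v := by
  rw [e2norm_eq_norm]
  exact norm_pos_iff.2 (by simpa using h)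

lemma e2norm_smul (a : ℝ) (v : Fin n → ℝ) : e2norm (a • v) = |a| * e2norm v := by
  rw [e2norm_eq_norm, e2norm_eq_norm, WithLp.toLp_smul, norm_smul, Real.norm_eq_abs]

lemma e2norm_sub_le_add (u v w : Fin n → ℝ) :
    e2norm (u - w) ≤ e2norm (u - v) + e2norm (v - w) := by
  simp only [e2norm_eq_norm, WithLp.toLp_sub]
  exact norm_sub_le_norm_sub_add_norm_sub _ _ _

lemma e2norm_const (a : ℝ) : e2norm (fun _ : Fin n => a) = √n * |a| := by
  simp [e2norm, Real.sqrt_mul, Real.sqrt_sq_eq_abs]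

lemma abs_le_e2norm (v : Fin n → ℝ) (r : Fin n) : |v r| ≤ e2norm v := by
  rw [← Real.sqrt_sq_eq_abs]
  exact Real.sqrt_le_sqrt
    (single_le_sum (f := fun i => v i ^ 2) (fun i _ => sq_nonneg _) (mem_univ r))

lemma e2norm_le_of_sq_le {u v : Fin n → ℝ} (h : ∀ i, u i ^ 2 ≤ v i ^ 2) : e2norm u ≤ e2norm v :=
  Real.sqrt_le_sqrt (sum_le_sum fun i _ => h i)

lemma card_mul_sq_le_e2norm_sq (v : Fin n → ℝ) {a : ℝ} (ha : 0 ≤ a) :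
    ((univ.filter fun r => a < |v r|).card : ℝ) * a ^ 2 ≤ e2norm v ^ 2 := by
  rw [e2norm_sq]
  calc ((univ.filter fun r => a < |v r|).card : ℝ) * a ^ 2
      = ∑ r ∈ univ.filter fun r => a < |v r|, a ^ 2 := by rw [sum_const, nsmul_eq_mul]
    _ ≤ ∑ r ∈ univ.filter fun r => a < |v r|, v r ^ 2 := by
        refine sum_le_sum fun r hr => ?_
        rw [← sq_abs (v r)]
        exact pow_le_pow_left₀ ha (mem_filter.1 hr).2.le 2
    _ ≤ ∑ r, v r ^ 2 := sum_le_sum_of_subset_of_nonneg (filter_subset _ _)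
        (fun i _ _ => sq_nonneg _)

lemma card_filter_le_card_filter_add_sq (a b : Fin n → ℝ) {θ k : ℝ} (hθ : 0 < θ)
    (h : e2norm (a - b) ≤ k * θ) :
    ((univ.filter fun r => 2 * θ ≤ b r).card : ℝ) ≤
      (univ.filter fun r => θ ≤ a r).card + k ^ 2 := by
  have hfar : ((univ.filter fun r => θ < |(a - b) r|).card : ℝ) ≤ k ^ 2 := by
    have h2 : e2norm (a - b) ^ 2 ≤ (k * θ) ^ 2 := pow_le_pow_left₀ (e2norm_nonneg _) h 2
    have := (card_mul_sq_le_e2norm_sq (a - b) hθ.le).trans h2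
    rwa [mul_pow, mul_le_mul_iff_left₀ (by positivity)] at this
  have hsub : (univ.filter fun r => 2 * θ ≤ b r) ⊆
      (univ.filter fun r => θ ≤ a r) ∪ univ.filter fun r => θ < |(a - b) r| := by
    intro r hr
    simp only [mem_union, mem_filter, mem_univ, true_and, Pi.sub_apply] at hr ⊢
    by_cases har : θ ≤ a r
    · exact Or.inl har
    · exact Or.inr (lt_abs.2 (Or.inr (by linarith)))
  calc ((univ.filter fun r => 2 * θ ≤ b r).card : ℝ)
      ≤ (univ.filter fun r => θ ≤ a r).card + (univ.filter fun r => θ < |(a - b) r|).card := by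
        exact_mod_cast (card_le_card hsub).trans (card_union_le _ _)
    _ ≤ _ := by linarith

end E2Norm

section Surjective

variable {k d : ℕ}

lemma zeroOutside_mulVec (M : Matrix (Fin k) (Fin d) ℝ) (A : Finset (Fin d)) (x : Fin d → ℝ) :
    zeroOutside M A *ᵥ x = M *ᵥ fun r => if r ∈ A then x r else 0 := by
  ext i
  simp only [mulVec, dotProduct, zeroOutside, Matrix.of_apply]
  exact sum_congr rfl fun j _ => by split_ifs <;> simp

lemma IsCSurj.exists_mulVec_eq {M : Matrix (Fin k) (Fin d) ℝ} {c : ℝ} (hM : IsCSurj M c)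
    (hc : 0 < c) (y : Fin k → ℝ) : ∃ x, e2norm x ≤ e2norm y / c ∧ M *ᵥ x = y := by
  rcases eq_or_ne y 0 with rfl | hy
  · exact ⟨0, by simp [e2norm_zero], by simp⟩
  have hy := e2norm_pos hy
  obtain ⟨x, hx, hMx⟩ := hM ((c / e2norm y) • y) (by
    rw [e2norm_smul, abs_of_pos (by positivity), div_mul_cancel₀ _ hy.ne'])
  refine ⟨(e2norm y / c) • x, ?_, ?_⟩
  · rw [e2norm_smul, abs_of_pos (by positivity)]
    exact mul_le_of_le_one_right (by positivity) hx
  · rw [mulVec_smul, hMx, smul_smul, div_mul_div_cancel₀ hc.ne', div_self hy.ne', one_smul]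

lemma IsCSurj.exists_mulVec_eq_of_zeroOutside {M : Matrix (Fin k) (Fin d) ℝ} {A : Finset (Fin d)}
    {c : ℝ} (hM : IsCSurj (zeroOutside M A) c) (hc : 0 < c) (y : Fin k → ℝ) :
    ∃ x, e2norm x ≤ e2norm y / c ∧ (∀ r, x r ≠ 0 → r ∈ A) ∧ M *ᵥ x = y := by
  obtain ⟨x, hx, hMx⟩ := hM.exists_mulVec_eq hc y
  refine ⟨fun r => if r ∈ A then x r else 0, ?_, fun r hr => ?_, ?_⟩
  · refine le_trans (e2norm_le_of_sq_le fun r => ?_) hx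
    split_ifs <;> simp [sq_nonneg]
  · by_contra hrA
    simp [hrA] at hr
  · rw [← zeroOutside_mulVec, hMx]

end Surjective

lemma relu_add {n : ℕ} (v w : Fin n → ℝ) (h : ∀ r, w r ≠ 0 → 0 ≤ v r ∧ 0 ≤ v r + w r) :
    relu (v + w) = relu v + w := by
  funext r
  by_cases hr : w r = 0
  · simp [relu, hr]
  · obtain ⟨h1, h2⟩ := h r hr
    simp only [relu, Pi.add_apply, max_eq_left h1, max_eq_left h2]

section Network

variable {D : ℕ → ℕ} {W : ∀ j : ℕ, Matrix (Fin (D (j + 1))) (Fin (D j)) ℝ}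

lemma netPost_eq_add_of_netPre_eq_add {x y : Fin (D 0) → ℝ} {j : ℕ} {v : Fin (D j) → ℝ}
    (hpre : netPre D W y j = netPre D W x j + v)
    (hact : j ≠ 0 → ∀ r, v r ≠ 0 → 0 ≤ netPre D W x j r ∧ 0 ≤ netPre D W x j r + v r) :
    netPost D W y j = netPost D W x j + v := by
  cases j with
  | zero => exact hpre
  | succ j =>
    change relu (netPre D W y (j + 1)) = relu (netPre D W x (j + 1)) + v
    rw [hpre, relu_add _ _ (hact j.succ_ne_zero)]

lemma exists_netPre_add_eq {c θ : ℝ} (hc : 0 < c) (hc_le : c ≤ 1) (x : Fin (D 0) → ℝ)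
    (A : ∀ i, Finset (Fin (D i))) (hA : ∀ i, i ≠ 0 → ∀ r ∈ A i, θ ≤ netPre D W x i r) :
    ∀ j : ℕ, (∀ i < j, IsCSurj (zeroOutside (W i) (A i)) c) →
      ∀ w : Fin (D j) → ℝ, e2norm w ≤ c ^ j * θ →
        ∃ u, netPre D W (x + u) j = netPre D W x j + w ∧
          ∀ i ≤ j, e2norm (netPre D W (x + u) i - netPre D W x i) ≤ θ := by
  intro j
  induction j with
  | zero =>
    intro _ w hw
    refine ⟨w, rfl, fun i hi => ?_⟩
    obtain rfl := Nat.le_zero.1 hi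
    simpa [netPre] using hw
  | succ j ih =>
    intro hsurj w hw
    have hθ : 0 ≤ θ := nonneg_of_mul_nonneg_right ((e2norm_nonneg w).trans hw) (by positivity)
    have hcθ : ∀ i, c ^ i * θ ≤ θ := fun i => mul_le_of_le_one_left hθ (pow_le_one₀ hc.le hc_le)
    obtain ⟨v, hv, hvA, hWv⟩ :=
      (hsurj j j.lt_succ_self).exists_mulVec_eq_of_zeroOutside hc w
    have hv' : e2norm v ≤ c ^ j * θ := by
      refine hv.trans ((div_le_iff₀ hc).2 ?_)
      rwa [mul_right_comm, ← pow_succ]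
    obtain ⟨u, hu, hbound⟩ := ih (fun i hi => hsurj i (by omega)) v hv'
    have hpost : netPost D W (x + u) j = netPost D W x j + v := by
      refine netPost_eq_add_of_netPre_eq_add hu fun hj r hr => ?_
      have hxr := hA j hj r (hvA r hr)
      have hvr := (abs_le_e2norm v r).trans (hv'.trans (hcθ j))
      constructor <;> linarith [abs_le.1 hvr]
    have hstep : netPre D W (x + u) (j + 1) = netPre D W x (j + 1) + w := by
      change W j *ᵥ netPost D W (x + u) j = W j *ᵥ netPost D W x j + w
      rw [hpost, mulVec_add, hWv]
    refine ⟨u, hstep, fun i hi => ?_⟩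
    rcases Nat.of_le_succ hi with hi | rfl
    · exact hbound i hi
    · rw [hstep, add_sub_cancel_left]
      exact hw.trans (hcθ _)

variable {c1 c θ : ℝ} {t : ℕ} {x0 : Fin (D 0) → ℝ}

lemma exists_netPre_add_eq_of_forall_e2norm_sub_le (hc1 : c1 ≤ 1) (hc : 0 < c) (hc_le : c ≤ 1)
    (hθ : 0 < θ) (hsurj : ∀ j < t, IsPairSurj (W j) c1 c)
    (hactive : ∀ i, 1 ≤ i → i < t →
      2 * c1 * D i ≤ (univ.filter fun r => 2 * θ ≤ netPre D W x0 i r).card)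
    {x : Fin (D 0) → ℝ} {k : ℝ} (hk : ∀ i, 1 ≤ i → i < t → k ^ 2 ≤ c1 * D i)
    (hx : ∀ i < t, e2norm (netPre D W x i - netPre D W x0 i) ≤ k * θ)
    (w : Fin (D t) → ℝ) (hw : e2norm w ≤ c ^ t * θ) :
    ∃ u, netPre D W (x + u) t = netPre D W x t + w ∧
      ∀ i ≤ t, e2norm (netPre D W (x + u) i - netPre D W x i) ≤ θ := by
  -- the input layer has no ReLU, so every input coordinate may be used
  set A : ∀ i, Finset (Fin (D i)) := fun i => univ.filter fun r => i = 0 ∨ θ ≤ netPre D W x i r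
  refine exists_netPre_add_eq hc hc_le x A
    (fun i hi r hr => ((mem_filter.1 hr).2.resolve_left hi)) t (fun i hit => hsurj i hit _ ?_) w hw
  rcases eq_or_ne i 0 with rfl | hi
  · have hA0 : A 0 = univ := filter_true_of_mem fun r _ => Or.inl rfl
    rw [hA0, card_univ, Fintype.card_fin]
    exact mul_le_of_le_one_left (Nat.cast_nonneg _) hc1
  · have hmono : ((univ.filter fun r => θ ≤ netPre D W x i r).card : ℝ) ≤ (A i).card := by
      exact_mod_cast card_le_card fun r hr => mem_filter.2 ⟨mem_univ r, Or.inr (mem_filter.1 hr).2⟩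
    have hi1 := Nat.one_le_iff_ne_zero.2 hi
    linarith [card_filter_le_card_filter_add_sq _ _ hθ (hx i hit), hactive i hi1 hit, hk i hi1 hit]

lemma exists_netOut_eq_add (hc1 : c1 ≤ 1) (hc : 0 < c) (hc_le : c ≤ 1) (hθ : 0 < θ)
    (hsurj : ∀ j < t, IsPairSurj (W j) c1 c) (hDt : D t = 1)
    (hactive : ∀ i, 1 ≤ i → i < t →
      2 * c1 * D i ≤ (univ.filter fun r => 2 * θ ≤ netPre D W x0 i r).card)
    (K : ℕ) (hK : ∀ i, 1 ≤ i → i < t → (K : ℝ) ^ 2 ≤ c1 * D i)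
    (a : ℝ) (ha : |a| ≤ K * (c ^ t * θ)) :
    ∃ x, netOut D W t x = netOut D W t x0 + a ∧
      ∀ i ≤ t, e2norm (netPre D W x i - netPre D W x0 i) ≤ K * θ := by
  induction K generalizing a with
  | zero =>
    obtain rfl : a = 0 := abs_nonpos_iff.1 (by simpa using ha)
    exact ⟨x0, by simp, fun i _ => by simp [e2norm_zero]⟩
  | succ K ih =>
    have hK1 : (0 : ℝ) < K + 1 := by positivity
    have hKsq : ∀ i, 1 ≤ i → i < t → (K : ℝ) ^ 2 ≤ c1 * D i := fun i hi hit =>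
      le_trans (pow_le_pow_left₀ K.cast_nonneg (by simp) 2) (hK i hi hit)
    obtain ⟨x, hxout, hx⟩ := ih hKsq (K / (K + 1) * a) (by
      rw [abs_mul, abs_of_nonneg (by positivity), div_mul_eq_mul_div, div_le_iff₀ hK1]
      refine (mul_le_mul_of_nonneg_left ha K.cast_nonneg).trans_eq ?_
      push_cast
      ring)
    have hw : e2norm (fun _ : Fin (D t) => a / (K + 1)) ≤ c ^ t * θ := by
      rw [e2norm_const, hDt, Nat.cast_one, Real.sqrt_one, one_mul, abs_div,
        abs_of_pos hK1, div_le_iff₀ hK1]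
      push_cast at ha
      linarith
    obtain ⟨u, hu, hstep⟩ :=
      exists_netPre_add_eq_of_forall_e2norm_sub_le hc1 hc hc_le hθ hsurj hactive hKsq
      (fun i hi => hx i hi.le) _ hw
    refine ⟨x + u, ?_, fun i hi => ?_⟩
    · have hout : netOut D W t (x + u) = netOut D W t x + a / (K + 1) := by
        simp [netOut, hu, sum_add_distrib, hDt]
      rw [hout, hxout]
      field_simp
      ring
    · push_cast
      linarith [e2norm_sub_le_add (netPre D W (x + u) i) (netPre D W x i) (netPre D W x0 i),
        hstep i hi, hx i hi]

end Network

lemma antitoneOn_nat_Iio_of_succ_le {α : Type*} [Preorder α] {f : ℕ → α} {k : ℕ}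
    (hf : ∀ n, n + 1 < k → f (n + 1) ≤ f n) : AntitoneOn f (Set.Iio k) := by
  intro a _ b hb hab
  induction b, hab using Nat.le_induction with
  | base => exact le_rfl
  | succ b hab ih => exact (hf b hb).trans (ih (lt_trans (Nat.lt_succ_self b) hb))

lemma half_le_sqrt_log {x : ℝ} (hx : 2 ≤ x) : 1 / 2 ≤ √(Real.log x) := by
  rw [Real.le_sqrt (by norm_num) (Real.log_nonneg (by linarith))]
  linarith [Real.log_le_log (by norm_num) hx, Real.log_two_gt_d9]

lemma natCeil_abs_div_le {c n d L h : ℝ} (t : ℕ) (hc : 0 < c) (hc_le : c ≤ 1) (hn : 0 < n)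
    (hd : 0 < d) (hL : 1 / 2 ≤ √L) (hh : |h| ≤ n * √(L / d)) :
    (⌈|h| / (c ^ t * (c * n / (2 * √d)))⌉₊ : ℝ) ≤ 4 * √L / c ^ (t + 1) := by
  have hB : |h| / (c ^ t * (c * n / (2 * √d))) ≤ 2 * √L / c ^ (t + 1) := by
    rw [div_le_iff₀ (by positivity)]
    refine hh.trans_eq ?_
    rw [Real.sqrt_div' _ hd.le]
    field_simp
    ring
  refine (Nat.cast_le.2 (Nat.ceil_mono hB)).trans ((Nat.ceil_le_two_mul ?_).trans_eq (by ring))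
  rw [le_div_iff₀ (by positivity)]
  nlinarith [pow_le_one₀ hc.le hc_le (n := t + 1)]

-- Here `D 0 = d = d_1, D 1 = d_2, …, D (t-1) = d_t, D t = d_{t+1} = 1`, and `W j` is the
-- `(j+1)`-st weight matrix `W_{j+1}`, of size `d_{j+2} × d_{j+1}`.
theorem stmt1_general (c1 c2 : ℝ) (hc1 : 0 < c1) (hc1' : c1 < 1) (hc2 : 0 < c2) (hc2' : c2 < 1)
    (t : ℕ) :
    ∃ C1 C2 : ℝ, 0 < C1 ∧ 0 < C2 ∧
      ∀ D : ℕ → ℕ,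
        (∀ j : ℕ, j + 1 < t → D (j + 1) ≤ D j) →        -- d_1 ≥ d_2 ≥ … ≥ d_t
        (C1 * Real.log (D 0) ≤ (D (t - 1) : ℝ)) →        -- d_t ≥ C1·ln d
        2 ≤ D 0 →                                        -- d ≥ 2
        D t = 1 →                                        -- output dimension is 1
        ∀ W : ∀ j : ℕ, Matrix (Fin (D (j + 1))) (Fin (D j)) ℝ,
          (∀ j : ℕ, j < t → IsPairSurj (W j) c1 c2) →    -- each W_j is (c1,c2)-surjective
          (∀ j : ℕ, j < t → ∀ v : Fin (D j) → ℝ,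
            e2norm ((W j).mulVec v) ≤ (1 / c2) * e2norm v) →  -- ‖W_j‖_op ≤ 1/c2
          ∀ x0 : Fin (D 0) → ℝ, x0 ≠ 0 →
            -- (i) for every 1 ≤ i ≤ t-1, at least 2·c1·d_{i+1} coordinates of
            --     h_{W_1,…,W_i}(x0) are at least c2·‖x0‖/√d
            (∀ i : ℕ, 1 ≤ i → i < t →
              2 * c1 * (D i : ℝ) ≤
                ((univ.filter fun r : Fin (D i) =>
                  c2 * e2norm x0 / Real.sqrt (D 0) ≤ netPre D W x0 i r).card : ℝ)) →
            -- (ii) |h(x0)| ≤ ‖x0‖·√(ln(d)/d)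
            |netOut D W t x0| ≤ e2norm x0 * Real.sqrt (Real.log (D 0) / (D 0 : ℝ)) →
            ∃ x' : Fin (D 0) → ℝ,
              e2norm (x' - x0) ≤
                C2 * e2norm x0 * Real.sqrt (Real.log (D 0)) / Real.sqrt (D 0) ∧
              netOut D W t x0 * netOut D W t x' ≤ 0 := by
  refine ⟨16 / (c1 * c2 ^ (2 * t + 2)), 2 / c2 ^ t, by positivity, by positivity, ?_⟩
  intro D hmono hC1 hd hDt W hsurj _ x0 hx0 hactive hout
  have hd : (2 : ℝ) ≤ D 0 := by exact_mod_cast hd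
  have hx0 := e2norm_pos hx0
  set θ := c2 * e2norm x0 / (2 * √(D 0))
  have hθ : 0 < θ := by positivity
  set K := ⌈|netOut D W t x0| / (c2 ^ t * θ)⌉₊
  have hKB : (K : ℝ) ≤ 4 * √(Real.log (D 0)) / c2 ^ (t + 1) :=
    natCeil_abs_div_le t hc2 hc2'.le hx0 (by positivity) (half_le_sqrt_log hd) hout
  have hK : ∀ i, 1 ≤ i → i < t → (K : ℝ) ^ 2 ≤ c1 * D i := by
    intro i hi hit
    have hDi : (D (t - 1) : ℝ) ≤ D i := by
      exact_mod_cast antitoneOn_nat_Iio_of_succ_le hmono hit (by simp; omega) (by omega)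
    calc (K : ℝ) ^ 2 ≤ (4 * √(Real.log (D 0)) / c2 ^ (t + 1)) ^ 2 :=
          pow_le_pow_left₀ K.cast_nonneg hKB 2
      _ = c1 * (16 / (c1 * c2 ^ (2 * t + 2)) * Real.log (D 0)) := by
        rw [div_pow, mul_pow, Real.sq_sqrt (Real.log_nonneg (by linarith)), ← pow_mul]
        field_simp
        ring
      _ ≤ c1 * D i := mul_le_mul_of_nonneg_left (hC1.trans hDi) hc1.le
  have h2θ : 2 * θ = c2 * e2norm x0 / √(D 0) := by simp only [θ]; field_simp
  obtain ⟨x', hx'out, hx'⟩ := exists_netOut_eq_add (x0 := x0) hc1'.le hc2 hc2'.le hθ hsurj hDt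
    (by simpa only [h2θ] using hactive) K hK (-netOut D W t x0) (by
      rw [abs_neg, ← div_le_iff₀ (by positivity)]; exact Nat.le_ceil _)
  refine ⟨x', ?_, by simp [hx'out]⟩
  calc e2norm (x' - x0) ≤ K * θ := hx' 0 (Nat.zero_le t)
    _ ≤ 4 * √(Real.log (D 0)) / c2 ^ (t + 1) * θ := mul_le_mul_of_nonneg_right hKB hθ.le
    _ = 2 / c2 ^ t * e2norm x0 * √(Real.log (D 0)) / √(D 0) := by
      simp only [θ]
      field_simp
      ring

/-- Theorem 4 in the paper, for typical weights and typical examples.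
Here `D 0 = d = d_1, D 1 = d_2, …, D (t-1) = d_t, D t = d_{t+1} = 1`, and `W j` is the
`(j+1)`-st weight matrix `W_{j+1}`, of size `d_{j+2} × d_{j+1}`. -/
theorem stmt1 (c1 c2 : ℝ) (hc1 : 0 < c1) (hc1' : c1 < 1) (hc2 : 0 < c2) (hc2' : c2 < 1)
    (t : ℕ) (ht : 2 ≤ t) :
    ∃ C1 C2 : ℝ, 0 < C1 ∧ 0 < C2 ∧
      ∀ D : ℕ → ℕ,
        (∀ j : ℕ, j + 1 < t → D (j + 1) ≤ D j) →        -- d_1 ≥ d_2 ≥ … ≥ d_t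
        (C1 * Real.log (D 0) ≤ (D (t - 1) : ℝ)) →        -- d_t ≥ C1·ln d
        2 ≤ D 0 →                                        -- d ≥ 2
        D t = 1 →                                        -- output dimension is 1
        ∀ W : ∀ j : ℕ, Matrix (Fin (D (j + 1))) (Fin (D j)) ℝ,
          (∀ j : ℕ, j < t → IsPairSurj (W j) c1 c2) →    -- each W_j is (c1,c2)-surjective
          (∀ j : ℕ, j < t → ∀ v : Fin (D j) → ℝ,
            e2norm ((W j).mulVec v) ≤ (1 / c2) * e2norm v) →  -- ‖W_j‖_op ≤ 1/c2
          ∀ x0 : Fin (D 0) → ℝ, x0 ≠ 0 →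
            -- (i) for every 1 ≤ i ≤ t-1, at least 2·c1·d_{i+1} coordinates of
            --     h_{W_1,…,W_i}(x0) are at least c2·‖x0‖/√d
            (∀ i : ℕ, 1 ≤ i → i < t →
              2 * c1 * (D i : ℝ) ≤
                ((univ.filter fun r : Fin (D i) =>
                  c2 * e2norm x0 / Real.sqrt (D 0) ≤ netPre D W x0 i r).card : ℝ)) →
            -- (ii) |h(x0)| ≤ ‖x0‖·√(ln(d)/d)
            |netOut D W t x0| ≤ e2norm x0 * Real.sqrt (Real.log (D 0) / (D 0 : ℝ)) →
            ∃ x' : Fin (D 0) → ℝ,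
              e2norm (x' - x0) ≤
                C2 * e2norm x0 * Real.sqrt (Real.log (D 0)) / Real.sqrt (D 0) ∧
              netOut D W t x0 * netOut D W t x' ≤ 0 :=
  stmt1_general c1 c2 hc1 hc1' hc2 hc2' t
end
end

section
/- For every constant c1 ∈ (0,1) there exist constants c2, c > 0 (depending only on c1) such that the following holds for every positive integer d: if X_1,...,X_d are i.i.d. standard Gaussian random variables and Z denotes the sum of the ⌈c1·d⌉ smallest values among X_1², ..., X_d², then Pr(Z > c2·d) ≥ 1 − 2·exp(−c·d). -/
/-!
If `Z ≤ c₂ d` with `c₂ = c₁ t / 2`, take a set `A` of `m = ⌈c₁ d⌉` indices realising `Z`: by a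
Markov count at most `c₂ d / t = c₁ d / 2` of them have `X_i² > t`, so at least `k ≥ c₁ d / 2`
coordinates satisfy `X_i² ≤ t`. Since the standard Gaussian density is at most `1/2`, a fixed set
of `k` coordinates has this property with probability at most `(√t)^k`, and a union bound over
at most `2^d` sets gives `2^d t^{c₁ d / 4}`, which equals `2^{-d}` for `t = 2^{-8/c₁}`.
-/

open MeasureTheory ProbabilityTheory Real Finset
open scoped ENNReal NNReal

noncomputable section

/-- The sum of the `m` smallest values among `X 1 ^ 2, …, X d ^ 2`: it equals the infimum,
over all subsets `A` of size `m`, of the sum of `X i ^ 2` for `i ∈ A`. -/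
def sumSmallestSquares {d : ℕ} (m : ℕ) (X : Fin d → ℝ) : ℝ :=
  sInf {s : ℝ | ∃ A : Finset (Fin d), A.card = m ∧ s = ∑ i ∈ A, X i ^ 2}

lemma gaussianPDFReal_le (μ : ℝ) (v : ℝ≥0) (x : ℝ) :
    gaussianPDFReal μ v x ≤ (√(2 * π * v))⁻¹ := by
  rw [gaussianPDFReal]
  refine mul_le_of_le_one_right (by positivity) (exp_le_one_iff.mpr ?_)
  exact div_nonpos_of_nonpos_of_nonneg (neg_nonpos.mpr (sq_nonneg _)) (by positivity)

lemma gaussianReal_le_mul_volume (μ : ℝ) {v : ℝ≥0} (hv : v ≠ 0) (s : Set ℝ) :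
    gaussianReal μ v s ≤ ENNReal.ofReal (√(2 * π * v))⁻¹ * volume s := by
  rw [gaussianReal_apply μ hv, ← setLIntegral_const]
  exact lintegral_mono fun x ↦ ENNReal.ofReal_le_ofReal (gaussianPDFReal_le μ v x)

lemma gaussianReal_sq_le_le (t : ℝ) :
    gaussianReal 0 1 {x | x ^ 2 ≤ t} ≤ ENNReal.ofReal √t := by
  have hsub : {x : ℝ | x ^ 2 ≤ t} ⊆ Set.Icc (-√t) √t := fun x hx ↦
    abs_le.mp (Real.abs_le_sqrt hx)
  have hπ : (√(2 * π * (1 : ℝ≥0)))⁻¹ ≤ 1 / 2 := by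
    rw [NNReal.coe_one, mul_one, inv_le_comm₀ (by positivity) (by norm_num),
      Real.le_sqrt (by norm_num) (by positivity)]
    linarith [pi_gt_three]
  calc gaussianReal 0 1 {x | x ^ 2 ≤ t}
      ≤ ENNReal.ofReal (√(2 * π * (1 : ℝ≥0)))⁻¹ * volume (Set.Icc (-√t) √t) :=
        (gaussianReal_le_mul_volume 0 one_ne_zero _).trans (by gcongr)
    _ ≤ ENNReal.ofReal (1 / 2) * ENNReal.ofReal (2 * √t) := by
        rw [volume_Icc, sub_neg_eq_add, ← two_mul]
        gcongr
    _ = ENNReal.ofReal √t := by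
        rw [← ENNReal.ofReal_mul (by norm_num)]
        ring_nf

lemma measure_pi_exists_card_forall_mem_le {ι α : Type*} [Fintype ι] [MeasurableSpace α]
    (μ : Measure α) [IsProbabilityMeasure μ] (k : ℕ) (s : Set α) :
    Measure.pi (fun _ : ι ↦ μ) {X | ∃ S : Finset ι, #S = k ∧ ∀ i ∈ S, X i ∈ s}
      ≤ (Fintype.card ι).choose k * μ s ^ k := by
  classical
  have hcover : {X : ι → α | ∃ S : Finset ι, #S = k ∧ ∀ i ∈ S, X i ∈ s}
      = ⋃ S ∈ (univ : Finset ι).powersetCard k, (S : Set ι).pi fun _ ↦ s := by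
    ext X
    simp [Set.mem_pi]
  calc _ ≤ ∑ S ∈ (univ : Finset ι).powersetCard k,
        Measure.pi (fun _ : ι ↦ μ) ((S : Set ι).pi fun _ ↦ s) :=
        hcover ▸ measure_biUnion_finset_le _ _
    _ = _ := by
        rw [sum_congr rfl fun S hS ↦ by
          rw [Measure.pi_pi_finset, prod_const, (mem_powersetCard.mp hS).2],
          sum_const, card_powersetCard, card_univ, nsmul_eq_mul]

lemma ofReal_one_sub_le_measure {Ω : Type*} [MeasurableSpace Ω] {μ : Measure Ω}
    [IsProbabilityMeasure μ] {s : Set Ω} {e : ℝ} (he : 0 ≤ e)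
    (hs : μ sᶜ ≤ ENNReal.ofReal e) : ENNReal.ofReal (1 - e) ≤ μ s := by
  rw [ENNReal.ofReal_sub _ he, ENNReal.ofReal_one, tsub_le_iff_right]
  calc 1 = μ (s ∪ sᶜ) := by rw [Set.union_compl_self, measure_univ]
    _ ≤ μ s + μ sᶜ := measure_union_le _ _
    _ ≤ μ s + ENNReal.ofReal e := by gcongr

lemma exists_card_eq_sumSmallestSquares_eq {d m : ℕ} (hmd : m ≤ d) (X : Fin d → ℝ) :
    ∃ A : Finset (Fin d), #A = m ∧ sumSmallestSquares m X = ∑ i ∈ A, X i ^ 2 := by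
  have hsums : {s : ℝ | ∃ A : Finset (Fin d), #A = m ∧ s = ∑ i ∈ A, X i ^ 2}
      = (fun A ↦ ∑ i ∈ A, X i ^ 2) '' {A | #A = m} := by
    ext s
    simp [eq_comm]
  obtain ⟨A, hA⟩ := exists_subset_card_eq (s := (univ : Finset (Fin d))) (by simpa using hmd)
  have hne : ((fun A ↦ ∑ i ∈ A, X i ^ 2) '' {A : Finset (Fin d) | #A = m}).Nonempty :=
    ⟨_, A, hA.2, rfl⟩
  obtain ⟨B, hB, hBsum⟩ := hne.csInf_mem (Set.toFinite _)
  exact ⟨B, hB, by rw [sumSmallestSquares, hsums, ← hBsum]⟩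

lemma card_sub_sum_div_le_card_filter_le {ι : Type*} (A : Finset ι) {f : ι → ℝ}
    (hf : ∀ i ∈ A, 0 ≤ f i) {t : ℝ} (ht : 0 < t) :
    (#A : ℝ) - (∑ i ∈ A, f i) / t ≤ #{i ∈ A | f i ≤ t} := by
  classical
  have hlarge : #{i ∈ A | ¬f i ≤ t} • t ≤ ∑ i ∈ A, f i :=
    calc #{i ∈ A | ¬f i ≤ t} • t ≤ ∑ i ∈ A with ¬f i ≤ t, f i :=
          card_nsmul_le_sum _ _ _ fun i hi ↦ (not_le.mp (mem_filter.mp hi).2).le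
      _ ≤ ∑ i ∈ A, f i := sum_le_sum_of_subset_of_nonneg (filter_subset _ _)
          fun i hi _ ↦ hf i hi
  rw [nsmul_eq_mul, ← le_div_iff₀ ht] at hlarge
  have hcard := card_filter_add_card_filter_not (s := A) (fun i ↦ f i ≤ t)
  rw [← hcard, Nat.cast_add]
  linarith

lemma exists_card_eq_ceil_forall_sq_le {d m : ℕ} (hmd : m ≤ d) {t s : ℝ} (ht : 0 < t)
    {X : Fin d → ℝ} (hX : sumSmallestSquares m X ≤ s) :
    ∃ S : Finset (Fin d), #S = ⌈(m : ℝ) - s / t⌉₊ ∧ ∀ i ∈ S, X i ^ 2 ≤ t := by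
  obtain ⟨A, hA, hAsum⟩ := exists_card_eq_sumSmallestSquares_eq hmd X
  have hsmall := card_sub_sum_div_le_card_filter_le A (fun i _ ↦ sq_nonneg (X i)) ht
  rw [hA, ← hAsum] at hsmall
  have hbound : (m : ℝ) - s / t ≤ #{i ∈ A | X i ^ 2 ≤ t} := hsmall.trans' (by gcongr)
  obtain ⟨S, hSsub, hS⟩ := exists_subset_card_eq (Nat.ceil_le.mpr hbound)
  exact ⟨S, hS, fun i hi ↦ (mem_filter.mp (hSsub hi)).2⟩

lemma choose_mul_sqrt_exp_pow_le {c1 : ℝ} (hc1 : 0 < c1) {d k : ℕ} (hk : c1 * d / 2 ≤ k) :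
    (d.choose k : ℝ) * √(exp (-8 * log 2 / c1)) ^ k ≤ exp (-log 2 * d) := by
  have hchoose : (d.choose k : ℝ) ≤ exp (log 2 * d) := by
    rw [mul_comm, exp_nat_mul, exp_log two_pos]
    exact_mod_cast d.choose_le_two_pow k
  have hpow : √(exp (-8 * log 2 / c1)) ^ k ≤ exp (-2 * log 2 * d) := by
    rw [sqrt_eq_rpow, ← exp_mul, ← exp_nat_mul, exp_le_exp]
    have hlog : 0 < log 2 := log_pos one_lt_two
    calc (k : ℝ) * (-8 * log 2 / c1 * (1 / 2)) ≤ c1 * d / 2 * (-8 * log 2 / c1 * (1 / 2)) :=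
          mul_le_mul_of_nonpos_right hk (mul_nonpos_of_nonpos_of_nonneg
            (div_nonpos_of_nonpos_of_nonneg (by linarith) hc1.le) (by norm_num))
      _ = -2 * log 2 * d := by field_simp; ring
  calc (d.choose k : ℝ) * √(exp (-8 * log 2 / c1)) ^ k
      ≤ exp (log 2 * d) * exp (-2 * log 2 * d) := by gcongr
    _ = exp (-log 2 * d) := by rw [← exp_add]; ring_nf

/-- Lemma 2 in the paper: for every `c1 ∈ (0,1)` there are `c2, c > 0` so
that if `X_1, …, X_d` are i.i.d. standard Gaussians and `Z` is the sum of the `⌈c1·d⌉`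
smallest values among the `X_i ^ 2`, then `Z > c2·d` with probability `≥ 1 - 2·exp(-c·d)`. -/
theorem stmt5 (c1 : ℝ) (hc1 : 0 < c1) (hc1' : c1 < 1) :
    ∃ c2 c : ℝ, 0 < c2 ∧ 0 < c ∧
      ∀ d : ℕ, 0 < d →
        ENNReal.ofReal (1 - 2 * Real.exp (-c * d)) ≤
          (Measure.pi fun _ : Fin d => gaussianReal 0 1)
            {X | c2 * d < sumSmallestSquares (Nat.ceil (c1 * d)) X} := by
  set t := exp (-8 * log 2 / c1)
  have ht : 0 < t := exp_pos _
  refine ⟨c1 * t / 2, log 2, by positivity, log_pos one_lt_two, fun d _ ↦ ?_⟩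
  set m := ⌈c1 * d⌉₊
  set k := ⌈(m : ℝ) - c1 * t / 2 * d / t⌉₊
  have hmd : m ≤ d := Nat.ceil_le.mpr (by nlinarith [d.cast_nonneg (α := ℝ)])
  have hk : c1 * d / 2 ≤ k := by
    have : c1 * t / 2 * d / t = c1 * d / 2 := by field_simp
    linarith [Nat.le_ceil (c1 * d), Nat.le_ceil ((m : ℝ) - c1 * t / 2 * d / t)]
  have hbad : {X | c1 * t / 2 * d < sumSmallestSquares m X}ᶜ
      ⊆ {X | ∃ S : Finset (Fin d), #S = k ∧ ∀ i ∈ S, X i ∈ {x : ℝ | x ^ 2 ≤ t}} :=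
    fun X hX ↦ exists_card_eq_ceil_forall_sq_le hmd (exp_pos _) (not_lt.mp hX)
  refine ofReal_one_sub_le_measure (by positivity) ((measure_mono hbad).trans ?_)
  calc _ ≤ d.choose k * gaussianReal 0 1 {x | x ^ 2 ≤ t} ^ k := by
        simpa only [Fintype.card_fin] using measure_pi_exists_card_forall_mem_le (ι := Fin d) _ k _
    _ ≤ ENNReal.ofReal (d.choose k * √t ^ k) := by
        rw [ENNReal.ofReal_mul (by positivity), ENNReal.ofReal_pow (sqrt_nonneg t),
          ENNReal.ofReal_natCast]
        gcongr
        exact gaussianReal_sq_le_le t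
    _ ≤ ENNReal.ofReal (2 * exp (-log 2 * d)) := ENNReal.ofReal_le_ofReal <|
        (choose_mul_sqrt_exp_pow_le hc1 hk).trans (by linarith [exp_pos (-log 2 * d)])
end
end

section
/- Let h : ℝ^d → ℝ be continuously differentiable, let x0 ∈ ℝ^d, and let c, r > 0 be such that ‖∇h(x)‖ ≥ c for every x in the closed ball of radius r centered at x0, and such that 0 < h(x0) < c·r. Then there exists x' ∈ ℝ^d with ‖x' − x0‖ ≤ r and h(x') ≤ 0. -/
/-!
Pick `c'` with `h x₀ / r < c' < c` and minimise `x ↦ h x + c' * ‖x - x₀‖` over the compact ball.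
If `h` were positive at the minimiser `z`, then `c' * ‖z - x₀‖ < h x₀ ≤ c' * r` puts `z` in the
open ball, so `z` is a local minimum; by the triangle inequality it is then also a local minimum
of `h + c' * ‖· - z‖`, which forces `‖∇h z‖ ≤ c' < c`.
-/

open Metric Set Filter Topology

section

variable {E : Type*} [NormedAddCommGroup E] [NormedSpace ℝ E]

theorem fderiv_apply_add_mul_norm_nonneg_of_isLocalMin {h : E → ℝ} {z : E} {c : ℝ}
    (hd : DifferentiableAt ℝ h z) (hmin : IsLocalMin (fun x => h x + c * ‖x - z‖) z) (v : E) :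
    0 ≤ fderiv ℝ h z v + c * ‖v‖ := by
  set φ : ℝ → ℝ := fun t => h (z + t • v) + c * (t * ‖v‖)
  have hφ : HasDerivAt φ (fderiv ℝ h z v + c * ‖v‖) 0 := by
    have hline : HasDerivAt (fun t : ℝ => z + t • v) v 0 := by
      simpa using ((hasDerivAt_id (0 : ℝ)).smul_const v).const_add z
    have hh : HasFDerivAt h (fderiv ℝ h z) (z + (0 : ℝ) • v) := by
      simpa using hd.hasFDerivAt
    exact (hh.comp_hasDerivAt 0 hline).add ((hasDerivAt_mul_const ‖v‖).const_mul c)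
  have hφmin : IsLocalMinOn φ (Ici 0) 0 := by
    have hray : ∀ᶠ t : ℝ in 𝓝 0, h z + c * ‖z - z‖ ≤ h (z + t • v) + c * ‖z + t • v - z‖ :=
      (Continuous.tendsto' (by fun_prop) 0 z (by simp)).eventually hmin
    filter_upwards [nhdsWithin_le_nhds hray, self_mem_nhdsWithin] with t ht (ht0 : 0 ≤ t)
    simpa [φ, norm_smul, abs_of_nonneg ht0] using ht
  refine hφmin.hasFDerivWithinAt_nonneg hφ.hasDerivWithinAt.hasFDerivWithinAt
    (y := 1) (mem_posTangentConeAt_of_segment_subset ?_) |>.trans_eq (by simp)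
  simp [segment_eq_Icc, Icc_subset_Ici_self]

theorem norm_fderiv_le_of_isLocalMin_add_mul_norm_sub {h : E → ℝ} {x₀ z : E} {c : ℝ}
    (hc : 0 ≤ c) (hd : DifferentiableAt ℝ h z)
    (hmin : IsLocalMin (fun x => h x + c * ‖x - x₀‖) z) : ‖fderiv ℝ h z‖ ≤ c := by
  have hmin' : IsLocalMin (fun x => h x + c * ‖x - z‖) z := by
    filter_upwards [hmin] with x hx
    have := mul_le_mul_of_nonneg_left (norm_sub_le_norm_sub_add_norm_sub x z x₀) hc
    simp only [sub_self, norm_zero, mul_zero, add_zero] at hx ⊢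
    linarith
  refine ContinuousLinearMap.opNorm_le_bound _ hc fun v => abs_le.2 ⟨?_, ?_⟩
  · linarith [fderiv_apply_add_mul_norm_nonneg_of_isLocalMin hd hmin' v]
  · simpa [norm_neg] using fderiv_apply_add_mul_norm_nonneg_of_isLocalMin hd hmin' (-v)

theorem exists_mem_closedBall_nonpos_of_lt_norm_fderiv [ProperSpace E] {h : E → ℝ} {x₀ : E}
    {c r : ℝ} (hc : 0 ≤ c) (hr : 0 ≤ r) (hcont : ContinuousOn h (closedBall x₀ r))
    (hdiff : ∀ x ∈ ball x₀ r, DifferentiableAt ℝ h x)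
    (hgrad : ∀ x ∈ ball x₀ r, c < ‖fderiv ℝ h x‖) (hsmall : h x₀ ≤ c * r) :
    ∃ x ∈ closedBall x₀ r, h x ≤ 0 := by
  set F : E → ℝ := fun x => h x + c * ‖x - x₀‖
  obtain ⟨z, hz, hzmin⟩ := (isCompact_closedBall x₀ r).exists_isMinOn
    (nonempty_closedBall.2 hr) (hcont.add (g := fun x => c * ‖x - x₀‖) (by fun_prop))
  refine ⟨z, hz, not_lt.1 fun hpos => ?_⟩
  have hFz : F z ≤ F x₀ := hzmin (mem_closedBall_self hr)
  have hzball : z ∈ ball x₀ r := by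
    rw [mem_ball_iff_norm]
    refine lt_of_mul_lt_mul_left ?_ hc
    simp only [F, sub_self, norm_zero, mul_zero, add_zero] at hFz
    linarith
  have hloc : IsLocalMin F z := hzmin.isLocalMin (closedBall_mem_nhds_of_mem hzball)
  exact (hgrad z hzball).not_ge
    (norm_fderiv_le_of_isLocalMin_add_mul_norm_sub hc (hdiff z hzball) hloc)

end

theorem norm_gradient_eq_norm_fderiv {F : Type*} [NormedAddCommGroup F] [InnerProductSpace ℝ F]
    [CompleteSpace F] (f : F → ℝ) (x : F) : ‖gradient f x‖ = ‖fderiv ℝ f x‖ :=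
  (InnerProductSpace.toDual ℝ F).symm.norm_map _

theorem stmt10_general {d : ℕ} (h : EuclideanSpace ℝ (Fin d) → ℝ) (hh : ContDiff ℝ 1 h)
    (x0 : EuclideanSpace ℝ (Fin d)) (c r : ℝ) (hr : 0 < r)
    (hgrad : ∀ x ∈ closedBall x0 r, c ≤ ‖gradient h x‖)
    (hpos : 0 < h x0) (hsmall : h x0 < c * r) :
    ∃ x' : EuclideanSpace ℝ (Fin d), ‖x' - x0‖ ≤ r ∧ h x' ≤ 0 := by
  obtain ⟨c', hc'lo, hc'hi⟩ := exists_between ((div_lt_iff₀ hr).2 hsmall)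
  obtain ⟨x', hx', hx'neg⟩ := exists_mem_closedBall_nonpos_of_lt_norm_fderiv (c := c')
    (div_pos hpos hr |>.trans hc'lo).le hr.le hh.continuous.continuousOn
    (fun x _ => hh.differentiable one_ne_zero x)
    (fun x hx => by
      rw [← norm_gradient_eq_norm_fderiv]
      exact hc'hi.trans_le (hgrad x (ball_subset_closedBall hx)))
    ((div_le_iff₀ hr).1 hc'lo.le)
  exact ⟨x', mem_closedBall_iff_norm.1 hx', hx'neg⟩

/-- analytic core of the gradient-flow argument: if `h` is `C¹`,
`‖∇h‖ ≥ c` on the closed ball of radius `r` around `x0`, and `0 < h(x0) < c·r`, then there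
is a point `x'` within distance `r` of `x0` with `h(x') ≤ 0`. -/
theorem stmt10 {d : ℕ} (h : EuclideanSpace ℝ (Fin d) → ℝ) (hh : ContDiff ℝ 1 h)
    (x0 : EuclideanSpace ℝ (Fin d)) (c r : ℝ) (hc : 0 < c) (hr : 0 < r)
    (hgrad : ∀ x ∈ closedBall x0 r, c ≤ ‖gradient h x‖)
    (hpos : 0 < h x0) (hsmall : h x0 < c * r) :
    ∃ x' : EuclideanSpace ℝ (Fin d), ‖x' - x0‖ ≤ r ∧ h x' ≤ 0 :=
  stmt10_general h hh x0 c r hr hgrad hpos hsmall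
end

section
/- Let d, m be positive integers, and let x, x', w ∈ ℝ^d satisfy: |w_i| ≤ 1/√d for every coordinate i, wᵀx ≥ 1, wᵀx' ≤ 0, and x' differs from x in at most m coordinates. Then max_i |x_i − x'_i| ≥ √d / m. -/
/-!
The perturbation `x - x'` lowers the score `wᵀx` by at least `1`, but it is supported on at most
`m` coordinates and each of them contributes at most `|w_i| · δ ≤ δ / √d`, where `δ` is the
largest coordinate change. Hence `1 ≤ m δ / √d`.
-/

open Finset

theorem sum_mul_le_card_support_mul {ι R : Type*} [Fintype ι] [Ring R] [LinearOrder R]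
    [IsOrderedRing R] (w v : ι → R) {c M : R} (hw : ∀ i, |w i| ≤ c)
    (hv : ∀ i, |v i| ≤ M) :
    ∑ i, w i * v i ≤ #{i | v i ≠ 0} • (c * M) := by
  rw [← sum_filter_of_ne fun i _ h => right_ne_zero_of_mul h]
  refine sum_le_card_nsmul _ _ (c * M) fun i _ => ?_
  calc w i * v i ≤ |w i| * |v i| := by rw [← abs_mul]; exact le_abs_self _
    _ ≤ c * M := mul_le_mul (hw i) (hv i) (abs_nonneg _) ((abs_nonneg _).trans (hw i))

theorem stmt13_general (d m : ℕ) (hd : 0 < d) (x x' w : Fin d → ℝ)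
    (hw : ∀ i, |w i| ≤ 1 / Real.sqrt d)
    (hx : 1 ≤ ∑ i, w i * x i) (hx' : ∑ i, w i * x' i ≤ 0)
    (hdiff : (univ.filter fun i => x i ≠ x' i).card ≤ m) :
    ∃ i, Real.sqrt d / m ≤ |x i - x' i| := by
  obtain ⟨i, -, hi⟩ :=
    exists_max_image univ (fun j => |x j - x' j|) (univ_nonempty_iff.2 ⟨⟨0, hd⟩⟩)
  refine ⟨i, div_le_of_le_mul₀ m.cast_nonneg (abs_nonneg _) ?_⟩
  have hsqrt : 0 < Real.sqrt d := Real.sqrt_pos.2 (by exact_mod_cast hd)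
  have key : 1 ≤ (m : ℝ) * (1 / Real.sqrt d * |x i - x' i|) := calc
    1 ≤ ∑ j, w j * (x j - x' j) := by simp only [mul_sub, sum_sub_distrib]; linarith
    _ ≤ #{j | x j - x' j ≠ 0} • (1 / Real.sqrt d * |x i - x' i|) :=
      sum_mul_le_card_support_mul _ _ hw fun j => hi j (mem_univ j)
    _ ≤ m * (1 / Real.sqrt d * |x i - x' i|) := by
      simp only [sub_ne_zero, nsmul_eq_mul]
      gcongr
  rw [one_div_mul_eq_div, ← mul_div_assoc, one_le_div hsqrt] at key
  linarith

/-- Example 1 in the paper: if `|w_i| ≤ 1/√d`, `wᵀx ≥ 1`, `wᵀx' ≤ 0`,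
and `x'` differs from `x` in at most `m` coordinates, then some coordinate moved by at
least `√d / m`. -/
theorem stmt13 (d m : ℕ) (hd : 0 < d) (hm : 0 < m) (x x' w : Fin d → ℝ)
    (hw : ∀ i, |w i| ≤ 1 / Real.sqrt d)
    (hx : 1 ≤ ∑ i, w i * x i) (hx' : ∑ i, w i * x' i ≤ 0)
    (hdiff : (univ.filter fun i => x i ≠ x' i).card ≤ m) :
    ∃ i, Real.sqrt d / m ≤ |x i - x' i| :=
  stmt13_general d m hd x x' w hw hx hx' hdiff
end

section
/- There exists a constant c > 0 such that for every positive integer k and every σ > 0: if g_1, ..., g_k are i.i.d. Gaussian random variables with mean 0 and variance σ², then with probability at least 1 − 2·exp(−c·k), it holds that σ²·k/4 ≤ Σ_{i=1}^{k} max(g_i, 0)² ≤ σ²·k. -/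
/-! For `g ~ N(0, v)` the moment generating function of `max(g, 0)²` is explicit: half of the
mass contributes `1`, and the Gaussian integral over the positive half-line gives
`E exp (t · max(g, 0)²) = (1 + (1 - 2vt)^(-1/2)) / 2` for `2vt < 1`. By independence the mgf of
the sum is its `k`-th power, so the Chernoff bounds at `t = -1/(2v)` (threshold `vk/4`) and at
`t = 1/(4v)` (threshold `vk`) bound the two tails by `(e^(1/8) (1 + 1/√2) / 2)^k` and
`(e^(-1/4) (1 + √2) / 2)^k`, both at most `e^(-k/100)`. -/

open MeasureTheory ProbabilityTheory Real Finset
open scoped NNReal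

lemma integrable_exp_neg_mul_sq_add_mul_relu_sq {a t : ℝ} (ha : 0 < a) (ht : t < a) :
    Integrable fun x : ℝ => rexp (-a * x ^ 2 + t * max x 0 ^ 2) := by
  have hb : 0 < min a (a - t) := lt_min ha (sub_pos.2 ht)
  refine (integrable_exp_neg_mul_sq hb).mono (by fun_prop) (ae_of_all _ fun x => ?_)
  simp only [norm_eq_abs, abs_exp, exp_le_exp]
  rcases le_total x 0 with hx | hx
  · rw [max_eq_right hx]
    nlinarith [min_le_left a (a - t), sq_nonneg x]
  · rw [max_eq_left hx]
    nlinarith [min_le_right a (a - t), sq_nonneg x]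

lemma integral_exp_neg_mul_sq_add_mul_relu_sq {a t : ℝ} (ha : 0 < a) (ht : t < a) :
    ∫ x, rexp (-a * x ^ 2 + t * max x 0 ^ 2) = (√(π / a) + √(π / (a - t))) / 2 := by
  have hint := integrable_exp_neg_mul_sq_add_mul_relu_sq ha ht
  rw [← intervalIntegral.integral_Iic_add_Ioi hint.integrableOn hint.integrableOn]
  have hneg : ∫ x in Set.Iic 0, rexp (-a * x ^ 2 + t * max x 0 ^ 2) = √(π / a) / 2 := by
    rw [setIntegral_congr_fun (g := fun x => rexp (-a * (-x) ^ 2)) measurableSet_Iic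
      fun x (hx : x ≤ 0) => by simp [max_eq_right hx],
      integral_comp_neg_Iic 0 fun x => rexp (-a * x ^ 2),
      neg_zero, integral_gaussian_Ioi]
  have hpos : ∫ x in Set.Ioi 0, rexp (-a * x ^ 2 + t * max x 0 ^ 2) = √(π / (a - t)) / 2 := by
    rw [setIntegral_congr_fun (g := fun x => rexp (-(a - t) * x ^ 2)) measurableSet_Ioi
      fun x (hx : 0 < x) => by simp only [max_eq_left hx.le]; ring_nf, integral_gaussian_Ioi]
  rw [hneg, hpos]
  ring

lemma mgf_relu_sq_gaussianReal {v : ℝ≥0} {t : ℝ} (ht : 2 * v * t < 1) :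
    mgf (fun x => max x 0 ^ 2) (gaussianReal 0 v) t = (1 + (√(1 - 2 * v * t))⁻¹) / 2 := by
  rcases eq_or_ne v 0 with rfl | hv
  · simp [mgf]
  have hv' : (0 : ℝ) < v := by positivity
  have ha : 0 < 1 / (2 * (v : ℝ)) := by positivity
  have hta : t < 1 / (2 * (v : ℝ)) := by rw [lt_div_iff₀ (by positivity)]; linarith
  have hpdf (x : ℝ) : gaussianPDFReal 0 v x • rexp (t * max x 0 ^ 2)
      = (√(2 * π * v))⁻¹ * rexp (-(1 / (2 * v)) * x ^ 2 + t * max x 0 ^ 2) := by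
    rw [gaussianPDFReal, smul_eq_mul, mul_assoc, ← exp_add]
    congr 3
    field_simp
    ring
  have hs : 0 < 1 - 2 * v * t := by linarith
  rw [mgf, integral_gaussianReal_eq_integral_smul hv]
  simp_rw [hpdf]
  rw [integral_const_mul, integral_exp_neg_mul_sq_add_mul_relu_sq ha hta,
    show π / (1 / (2 * v)) = 2 * π * v by field_simp,
    show π / (1 / (2 * v) - t) = 2 * π * v / (1 - 2 * v * t) by field_simp,
    sqrt_div' _ hs.le]
  have : 0 < √(2 * π * v) := by positivity
  field_simp

lemma integrable_exp_mul_relu_sq_gaussianReal {v : ℝ≥0} {t : ℝ} (ht : 2 * v * t < 1) :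
    Integrable (fun x => rexp (t * max x 0 ^ 2)) (gaussianReal 0 v) := by
  rw [← mgf_pos_iff, mgf_relu_sq_gaussianReal ht]
  positivity

lemma exp_one_div_eight_mul_le : rexp (1 / 8) * ((1 + (√2)⁻¹) / 2) ≤ rexp (-(1 / 100)) := by
  have h8 : rexp (1 / 8) ≤ 8 / 7 := by
    have h : (7 / 8 : ℝ) ≤ (rexp (1 / 8))⁻¹ := by
      rw [← exp_neg]
      linarith [add_one_le_exp (-(1 / 8))]
    rw [le_inv_comm₀ (by norm_num) (exp_pos _)] at h
    norm_num at h
    exact h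
  have hsqrt : (√2)⁻¹ ≤ 5 / 7 := by
    rw [inv_le_comm₀ (by positivity) (by norm_num), le_sqrt (by norm_num) (by norm_num)]
    norm_num
  calc rexp (1 / 8) * ((1 + (√2)⁻¹) / 2) ≤ 8 / 7 * ((1 + 5 / 7) / 2) := by gcongr
    _ ≤ 1 + -(1 / 100) := by norm_num
    _ ≤ rexp (-(1 / 100)) := add_one_le_exp _ |>.trans_eq' (add_comm _ _)

lemma exp_neg_one_div_four_mul_le : rexp (-(1 / 4)) * ((1 + √2) / 2) ≤ rexp (-(1 / 100)) := by
  have h4 : rexp (-(1 / 4)) ≤ 4 / 5 := by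
    have := add_one_le_exp (1 / 4)
    rw [exp_neg, inv_le_comm₀ (exp_pos _) (by norm_num)]
    linarith
  have hsqrt : √2 ≤ 17 / 12 := by
    rw [sqrt_le_left (by norm_num)]
    norm_num
  calc rexp (-(1 / 4)) * ((1 + √2) / 2) ≤ 4 / 5 * ((1 + 17 / 12) / 2) := by gcongr
    _ ≤ 1 + -(1 / 100) := by norm_num
    _ ≤ rexp (-(1 / 100)) := add_one_le_exp _ |>.trans_eq' (add_comm _ _)

section Pi

variable {ι Ω : Type*} [Fintype ι] [MeasurableSpace Ω] {μ : Measure Ω}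
  [IsProbabilityMeasure μ] {f : Ω → ℝ} {t : ℝ}

lemma mgf_sum_comp_eval_pi (hf : Measurable f) :
    mgf (fun g : ι → Ω => ∑ i, f (g i)) (Measure.pi fun _ => μ) t
      = mgf f μ t ^ Fintype.card ι := by
  have h := (iIndepFun_pi (μ := fun _ : ι => μ) fun _ => hf.aemeasurable).mgf_sum (t := t)
    (fun i => hf.comp (measurable_pi_apply i)) univ
  simp only [Finset.sum_fn] at h
  rw [h, ← card_univ, ← prod_const]
  exact prod_congr rfl fun i _ => integral_comp_eval (X := fun _ => Ω) (μ := fun _ => μ)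
    (f := fun x => rexp (t * f x)) (by fun_prop)

lemma integrable_exp_mul_sum_comp_eval_pi (hf : Measurable f)
    (hint : Integrable (fun x => rexp (t * f x)) μ) :
    Integrable (fun g : ι → Ω => rexp (t * ∑ i, f (g i))) (Measure.pi fun _ => μ) := by
  simpa only [Finset.sum_fn] using
    (iIndepFun_pi (μ := fun _ : ι => μ) fun _ => hf.aemeasurable).integrable_exp_mul_sum
      (fun i => hf.comp (measurable_pi_apply i)) fun i _ => integrable_comp_eval
        (X := fun _ => Ω) (μ := fun _ => μ) (f := fun x => rexp (t * f x)) hint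

end Pi

section Tails

variable (k : ℕ) {v : ℝ≥0} (hv : v ≠ 0)
include hv

lemma measureReal_sum_relu_sq_le_le_exp :
    (Measure.pi fun _ : Fin k => gaussianReal 0 v).real
        {g | ∑ i, max (g i) 0 ^ 2 ≤ v * k / 4} ≤ rexp (-(1 / 100) * k) := by
  have hv' : (0 : ℝ) < v := by positivity
  have ht : 2 * v * (-(1 / (2 * v))) < (1 : ℝ) := by field_simp; norm_num
  have hint := integrable_exp_mul_sum_comp_eval_pi (ι := Fin k) (by fun_prop)
    (integrable_exp_mul_relu_sq_gaussianReal ht)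
  calc _ ≤ _ := measure_le_le_exp_mul_mgf _ (by simp) hint
    _ = (rexp (1 / 8) * ((1 + (√2)⁻¹) / 2)) ^ k := by
        rw [mgf_sum_comp_eval_pi (f := fun x => max x 0 ^ 2) (by fun_prop),
          mgf_relu_sq_gaussianReal ht, Fintype.card_fin, mul_pow, ← exp_nat_mul,
          show 1 - 2 * v * (-(1 / (2 * v))) = (2 : ℝ) by field_simp; norm_num]
        congr 2
        field_simp
        ring
    _ ≤ rexp (-(1 / 100)) ^ k := by gcongr; exact exp_one_div_eight_mul_le
    _ = rexp (-(1 / 100) * k) := by rw [← exp_nat_mul]; ring_nf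

lemma measureReal_le_sum_relu_sq_le_exp :
    (Measure.pi fun _ : Fin k => gaussianReal 0 v).real
        {g | v * k ≤ ∑ i, max (g i) 0 ^ 2} ≤ rexp (-(1 / 100) * k) := by
  have hv' : (0 : ℝ) < v := by positivity
  have ht : 2 * v * (1 / (4 * v)) < (1 : ℝ) := by field_simp; norm_num
  have hint := integrable_exp_mul_sum_comp_eval_pi (ι := Fin k) (by fun_prop)
    (integrable_exp_mul_relu_sq_gaussianReal ht)
  calc _ ≤ _ := measure_ge_le_exp_mul_mgf _ (by positivity) hint
    _ = (rexp (-(1 / 4)) * ((1 + √2) / 2)) ^ k := by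
        rw [mgf_sum_comp_eval_pi (f := fun x => max x 0 ^ 2) (by fun_prop),
          mgf_relu_sq_gaussianReal ht, Fintype.card_fin, mul_pow, ← exp_nat_mul,
          show 1 - 2 * v * (1 / (4 * v)) = (2⁻¹ : ℝ) by field_simp; norm_num, sqrt_inv,
          inv_inv]
        congr 2
        field_simp
    _ ≤ rexp (-(1 / 100)) ^ k := by gcongr; exact exp_neg_one_div_four_mul_le
    _ = rexp (-(1 / 100) * k) := by rw [← exp_nat_mul]; ring_nf

end Tails

/-- there is `c > 0` such that for i.i.d. `N(0, σ²)` variables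
`g_1, …, g_k`, with probability `≥ 1 - 2·exp(-c·k)` the squared norm of the coordinatewise
ReLU satisfies `σ²·k/4 ≤ Σ_i max(g_i, 0)² ≤ σ²·k`. -/
theorem stmt15 :
    ∃ c : ℝ, 0 < c ∧
      ∀ k : ℕ, 0 < k → ∀ σ : NNReal, 0 < σ →
        ENNReal.ofReal (1 - 2 * Real.exp (-c * k)) ≤
          (Measure.pi fun _ : Fin k => gaussianReal 0 (σ ^ 2))
            {g | (σ : ℝ) ^ 2 * k / 4 ≤ ∑ i, max (g i) 0 ^ 2 ∧
                 ∑ i, max (g i) 0 ^ 2 ≤ (σ : ℝ) ^ 2 * k} := by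
  refine ⟨1 / 100, by norm_num, fun k _ σ hσ => ?_⟩
  have hv : σ ^ 2 ≠ 0 := pow_ne_zero _ hσ.ne'
  have hlow := measureReal_sum_relu_sq_le_le_exp k hv
  have hup := measureReal_le_sum_relu_sq_le_exp k hv
  push_cast at hlow hup
  set P := Measure.pi fun _ : Fin k => gaussianReal 0 (σ ^ 2)
  set S := fun g : Fin k → ℝ => ∑ i, max (g i) 0 ^ 2
  set G := {g | (σ : ℝ) ^ 2 * k / 4 ≤ S g ∧ S g ≤ (σ : ℝ) ^ 2 * k}
  set L := {g | S g ≤ (σ : ℝ) ^ 2 * k / 4}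
  set U := {g | (σ : ℝ) ^ 2 * k ≤ S g}
  have hcover : Set.univ ⊆ G ∪ L ∪ U := by
    intro g _
    rcases le_total (S g) ((σ : ℝ) ^ 2 * k / 4) with hl | hl
    · exact Or.inl (Or.inr hl)
    rcases le_total (S g) ((σ : ℝ) ^ 2 * k) with hu | hu
    · exact Or.inl (Or.inl ⟨hl, hu⟩)
    · exact Or.inr hu
  have hgood : 1 - 2 * rexp (-(1 / 100) * k) ≤ P.real G := by
    linarith [probReal_univ (μ := P), measureReal_mono (μ := P) hcover,
      measureReal_union_le (μ := P) (G ∪ L) U, measureReal_union_le (μ := P) G L]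
  rw [← ofReal_measureReal]
  exact ENNReal.ofReal_le_ofReal hgood
end
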